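/- Let f(x) = a_0 x^n + ... + a_n be a real polynomial of degree n and let 2 ≤ M ≤ n. If all the leading coefficients h_0, h_1, ..., h_n of the polynomials f_0, ..., f_n produced by the generalized Euclidean algorithm with step M are positive, then all n special minors Δ_p, p = 1, ..., n, of the generalized Hurwitz matrix H_M(f) are strictly positive, and H_M(f) is totally nonnegative. -/

import Mathlib

open Polynomial

/-- The arithmetic part `f_j` of the polynomial with coefficients `a_0,...,a_n`:
`f_j(x) = Σ_{0 ≤ l ≤ n, l ≡ j (mod M)} a_l x^(n-l)`. -/
noncomputable def geaInit (a : ℕ → ℝ) (n M j : ℕ) : Polynomial ℝ :=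
  ∑ l ∈ Finset.range (n + 1), if l % M = j then C (a l) * X ^ (n - l) else 0

/-- The polynomials `f_0, f_1, ..., f_n` of the generalized Euclidean algorithm with step `M`:
`f_i = d_i f_{i+1} + f_{i+M}` where `d_i = f_i / f_{i+1}` and `f_{i+M} = f_i % f_{i+1}`
(Euclidean division of polynomials). -/
noncomputable def gea (a : ℕ → ℝ) (n M : ℕ) : ℕ → Polynomial ℝ
  | i =>
    if _h : i < M then geaInit a n M i
    else if _h2 : 2 ≤ M then
      gea a n M (i - M) % gea a n M (i - M + 1)
    else 0
  termination_by i => i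
  decreasing_by all_goals omega

/-- Entry `(i,j)` (0-based) of the generalized Hurwitz matrix `H_M(f) = (a_{Mj-i})_{i,j≥1}`,
with `a_k := 0` for `k < 0` and `k > n`. -/
def hEntry (a : ℕ → ℝ) (n M : ℕ) (i j : ℕ) : ℝ :=
  if i + 1 ≤ M * (j + 1) ∧ M * (j + 1) - (i + 1) ≤ n then a (M * (j + 1) - (i + 1)) else 0

/-- Total nonnegativity of an infinite matrix: every minor is nonnegative. -/
def IsTotallyNonneg (A : ℕ → ℕ → ℝ) : Prop :=
  ∀ (p : ℕ) (r c : Fin p → ℕ), StrictMono r → StrictMono c →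
    0 ≤ Matrix.det (Matrix.of fun s t : Fin p => A (r s) (c t))

/-- The special minor `H_M(k,r)` on rows `k, k+1, ..., k+r-1` and columns `1, ..., r`
(1-based indexing). -/
noncomputable def specialMinor (a : ℕ → ℝ) (n M k r : ℕ) : ℝ :=
  Matrix.det (Matrix.of fun s t : Fin r => hEntry a n M (k - 1 + s) t)

/-!
With `q = a₀ / a₁`, one step of the algorithm gives `f_M = f₀ - q x f₁`, and since `f_i` only has
exponents `≡ n - i (mod M)`, the polynomial `g = f₁ + ⋯ + f_M` of degree `n - 1` has `f₁, f₂, …` as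
its own Euclidean sequence. On the Hurwitz side this reads row by row as
`H_M(f)_i = H_M(g)_{i+1} + [M ∣ i] q H_M(g)_i`: `H_M(f)` is `H_M(g)` multiplied on the left by an
upper bidiagonal matrix with nonnegative entries. Expanding a minor of `H_M(f)` multilinearly in its
rows writes it as a nonnegative combination of minors of `H_M(g)` on weakly increasing rows, so
total nonnegativity goes up the induction on `n`; for a special minor (consecutive rows starting
off the multiples of `M`) the expansion collapses to one special minor of `H_M(g)`, shifted down by
a row, or, when `k = M - 1`, to `a₁` times a special minor of one size less. For `n = 0` the matrix
has its nonzero entries on the graph of a monotone map, so all its minors are diagonal or vanish.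
-/

theorem Nat.add_one_mod_of_lt {L M : ℕ} (h : L % M + 1 < M) : (L + 1) % M = L % M + 1 := by
  conv_lhs => rw [← Nat.div_add_mod L M, add_assoc, Nat.mul_add_mod, Nat.mod_eq_of_lt h]

theorem Nat.add_one_mod_of_not_dvd {L M : ℕ} (h : ¬ M ∣ L + 1) : (L + 1) % M = L % M + 1 := by
  rcases Nat.eq_zero_or_pos M with rfl | hM
  · simp
  refine Nat.add_one_mod_of_lt (lt_of_le_of_ne (Nat.mod_lt L hM) fun heq => h ⟨L / M + 1, ?_⟩)
  have := Nat.div_add_mod L M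
  rw [mul_add]
  omega

theorem Nat.mod_add_one_of_dvd {L M : ℕ} (h : M ∣ L + 1) : L % M + 1 = M := by
  rcases Nat.eq_zero_or_pos M with rfl | hM
  · simp at h
  refine le_antisymm (Nat.mod_lt L hM) (not_lt.1 fun hlt => ?_)
  have := Nat.add_one_mod_of_lt hlt
  rw [Nat.mod_eq_zero_of_dvd h] at this
  omega

theorem Nat.not_modEq_add_one {M : ℕ} (hM : 2 ≤ M) (x : ℕ) : ¬ x ≡ x + 1 [MOD M] := fun h => by
  have := Nat.le_of_dvd one_pos (by simpa using (Nat.modEq_iff_dvd' (Nat.le_succ x)).1 h)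
  omega

theorem Polynomial.coeff_nonneg_of_natDegree_le {p : ℝ[X]} {n : ℕ} (hp : p.natDegree ≤ n)
    (h : 0 ≤ p.leadingCoeff) : 0 ≤ p.coeff n := by
  rcases hp.eq_or_lt with rfl | hlt
  · exact h
  · rw [coeff_eq_zero_of_natDegree_lt hlt]

section ResidueClass

variable {K : Type*} [Field K] {M c n : ℕ}

/-- All exponents of `p` are `≡ n - c (mod M)`, stated without truncated subtraction. -/
def ExponentsModEq (M c n : ℕ) (p : K[X]) : Prop :=
  ∀ e, p.coeff e ≠ 0 → e + c ≡ n [MOD M]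

noncomputable def residuePart (M c n : ℕ) (p : K[X]) : K[X] :=
  ∑ e ∈ p.support, monomial e (if e + c ≡ n [MOD M] then p.coeff e else 0)

theorem coeff_residuePart (p : K[X]) (e : ℕ) :
    (residuePart M c n p).coeff e = if e + c ≡ n [MOD M] then p.coeff e else 0 := by
  simp only [residuePart, finsetSum_coeff, coeff_monomial, Finset.sum_ite_eq', mem_support_iff]
  split_ifs <;> simp_all

theorem exponentsModEq_residuePart (p : K[X]) : ExponentsModEq M c n (residuePart M c n p) := by
  intro e he
  rw [coeff_residuePart] at he
  by_contra h
  exact he (if_neg h)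

theorem ExponentsModEq.residuePart_eq {p : K[X]} (hp : ExponentsModEq M c n p) :
    residuePart M c n p = p := by
  ext e
  rw [coeff_residuePart, ite_eq_left_iff]
  exact fun h => by_contra fun hne => h (hp e (Ne.symm hne))

theorem ExponentsModEq.add_modulus {p : K[X]} (hp : ExponentsModEq M c n p) :
    ExponentsModEq M (c + M) n p := fun e he => by
  rw [← add_assoc]
  exact Nat.add_modulus_modEq_iff.2 (hp e he)

theorem residuePart_add (p q : K[X]) :
    residuePart M c n (p + q) = residuePart M c n p + residuePart M c n q := by
  ext e
  simp only [coeff_residuePart, coeff_add]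
  split_ifs <;> simp

theorem degree_residuePart_le (p : K[X]) : (residuePart M c n p).degree ≤ p.degree :=
  degree_le_iff_coeff_zero _ _ |>.2 fun e he => by
    rw [coeff_residuePart, coeff_eq_zero_of_degree_lt he, ite_self]

theorem residuePart_mul {g : K[X]} (hg : ExponentsModEq M (c + 1) n g) (u : K[X]) :
    residuePart M c n (u * g) = residuePart M 0 1 u * g := by
  ext e
  simp only [coeff_residuePart, coeff_mul, add_zero, ite_mul, zero_mul]
  have key : ∀ x : ℕ × ℕ, x.1 + x.2 = e → g.coeff x.2 ≠ 0 →
      (x.1 ≡ 1 [MOD M] ↔ e + c ≡ n [MOD M]) := by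
    intro x hx hgx
    have h1 : 1 + (x.2 + c) ≡ n [MOD M] := by rw [add_comm, add_assoc]; exact hg _ hgx
    rw [← hx, add_assoc]
    exact ⟨fun h => (h.add_right _).trans h1,
      fun h => Nat.ModEq.add_right_cancel' _ (h.trans h1.symm)⟩
  split_ifs with he
  · refine Finset.sum_congr rfl fun x hx => ?_
    by_cases hgx : g.coeff x.2 = 0
    · simp [hgx]
    · rw [if_pos ((key x (Finset.HasAntidiagonal.mem_antidiagonal.1 hx) hgx).2 he)]
  · refine (Finset.sum_eq_zero fun x hx => ?_).symm
    by_cases hgx : g.coeff x.2 = 0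
    · simp [hgx]
    · rw [if_neg (mt (key x (Finset.HasAntidiagonal.mem_antidiagonal.1 hx) hgx).1 he)]

theorem ExponentsModEq.mod {p g : K[X]} (hp : ExponentsModEq M c n p)
    (hg : ExponentsModEq M (c + 1) n g) : ExponentsModEq M c n (p % g) := by
  rcases eq_or_ne g 0 with rfl | hg0
  · rwa [EuclideanDomain.mod_zero]
  -- Projecting `p = g * (p / g) + p % g` onto the exponents of `p` is again a division with
  -- remainder by `g`, so by uniqueness the projected remainder is `p % g` itself.
  have hsplit : p = g * residuePart M 0 1 (p / g) + residuePart M c n (p % g) := by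
    conv_lhs => rw [← hp.residuePart_eq, ← EuclideanDomain.div_add_mod p g]
    rw [residuePart_add, mul_comm g, residuePart_mul hg, mul_comm]
  have hdeg : (residuePart M c n (p % g)).degree < g.degree :=
    (degree_residuePart_le _).trans_lt (EuclideanDomain.mod_lt _ hg0)
  have hmod : p % g = residuePart M c n (p % g) :=
    (mod_eq_of_dvd_sub ⟨_, by rw [sub_eq_iff_eq_add, ← hsplit]⟩).trans
      ((mod_eq_self_iff hg0).2 hdeg)
  exact hmod ▸ exponentsModEq_residuePart _

end ResidueClass

section GeneralizedEuclid

variable {a : ℕ → ℝ} {n M : ℕ}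

theorem coeff_geaInit (j e : ℕ) :
    (geaInit a n M j).coeff e = if e ≤ n ∧ (n - e) % M = j then a (n - e) else 0 := by
  simp only [geaInit, finsetSum_coeff, apply_ite (coeff · e), coeff_C_mul_X_pow, coeff_zero]
  by_cases he : e ≤ n
  · rw [Finset.sum_eq_single (n - e)]
    · simp [he, Nat.sub_sub_self he]
    · intro l hl hne
      rw [Finset.mem_range] at hl
      split_ifs <;> first | rfl | omega
    · simp
  · rw [if_neg (fun h => he h.1)]
    refine Finset.sum_eq_zero fun l hl => ?_
    rw [Finset.mem_range] at hl
    split_ifs <;> first | rfl | omega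

theorem exponentsModEq_geaInit (j : ℕ) : ExponentsModEq M j n (geaInit a n M j) := by
  intro e he
  rw [coeff_geaInit] at he
  obtain ⟨hen, rfl⟩ : e ≤ n ∧ (n - e) % M = j := by by_contra h; exact he (if_neg h)
  calc e + (n - e) % M ≡ e + (n - e) [MOD M] := (Nat.mod_modEq _ _).add_left e
    _ = n := Nat.add_sub_cancel' hen

theorem gea_of_lt {i : ℕ} (h : i < M) : gea a n M i = geaInit a n M i := by
  rw [gea]; simp [h]

theorem gea_of_le (hM : 2 ≤ M) {i : ℕ} (h : M ≤ i) :
    gea a n M i = gea a n M (i - M) % gea a n M (i - M + 1) := by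
  rw [gea]; simp [hM, Nat.not_lt.2 h]

theorem exponentsModEq_gea (hM : 2 ≤ M) (i : ℕ) : ExponentsModEq M i n (gea a n M i) := by
  induction i using Nat.strong_induction_on with
  | _ i ih =>
    rcases lt_or_ge i M with h | h
    · rw [gea_of_lt h]
      exact exponentsModEq_geaInit i
    · rw [gea_of_le hM h]
      have := ((ih (i - M) (by omega)).mod (ih (i - M + 1) (by omega))).add_modulus
      rwa [Nat.sub_add_cancel h] at this

theorem coeff_gea_eq_zero (hM : 2 ≤ M) {i e : ℕ} (h : ¬ e + i ≡ n [MOD M]) :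
    (gea a n M i).coeff e = 0 :=
  by_contra fun he => h (exponentsModEq_gea hM i e he)

theorem natDegree_gea_add_modEq (hM : 2 ≤ M) {i : ℕ} (hi : gea a n M i ≠ 0) :
    (gea a n M i).natDegree + i ≡ n [MOD M] :=
  exponentsModEq_gea hM i _ (leadingCoeff_ne_zero.2 hi)

theorem natDegree_gea_lt (hM : 2 ≤ M) {i : ℕ} (h : M ≤ i) (hi : gea a n M i ≠ 0)
    (hi' : gea a n M (i - M + 1) ≠ 0) :
    (gea a n M i).natDegree < (gea a n M (i - M + 1)).natDegree := by
  refine natDegree_lt_natDegree hi ?_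
  rw [gea_of_le hM h]
  exact EuclideanDomain.mod_lt _ hi'

theorem natDegree_gea_le (hM : 2 ≤ M) (hne : ∀ i ≤ n, gea a n M i ≠ 0) {i : ℕ} (hi : i ≤ n) :
    (gea a n M i).natDegree ≤ n - i := by
  induction i using Nat.strong_induction_on with
  | _ i ih =>
    rcases lt_or_ge i M with h | h
    · rw [gea_of_lt h]
      refine natDegree_le_iff_coeff_eq_zero.2 fun e he => ?_
      rw [coeff_geaInit, if_neg]
      rintro ⟨hen, hj⟩
      have := Nat.mod_le (n - e) M
      omega
    · -- The degree drops below that of `f_{i-M+1}`, by at least `M - 1` because of the congruence.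
      have hlt := natDegree_gea_lt hM h (hne i hi) (hne _ (by omega))
      have hprev := ih (i - M + 1) (by omega) (by omega)
      by_contra! hgt
      have := (natDegree_gea_add_modEq hM (hne i hi)).symm.add_le_of_lt (by omega)
      omega

theorem natDegree_gea (hM : 2 ≤ M) (hne : ∀ i ≤ n, gea a n M i ≠ 0) {i : ℕ} (hi1 : 1 ≤ i)
    (hi : i ≤ n) : (gea a n M i).natDegree = n - i := by
  induction h : n - i using Nat.strong_induction_on generalizing i with
  | _ k ih =>
    have hle := natDegree_gea_le hM hne hi
    suffices n < (gea a n M i).natDegree + i + M by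
      have := (natDegree_gea_add_modEq hM (hne i hi)).symm.le_of_lt_add this
      omega
    by_cases hk : k + 1 < M
    · omega
    · -- `f_{i+M-1} = f_{i-1} % f_i` has the exact degree `n - i - M + 1` by induction.
      have hlt := natDegree_gea_lt (i := i + (M - 1)) hM (by omega) (hne _ (by omega))
        (by rw [show i + (M - 1) - M + 1 = i by omega]; exact hne i hi)
      rw [show i + (M - 1) - M + 1 = i by omega, ih _ (by omega) (by omega) (by omega) rfl] at hlt
      omega

theorem coeff_gea_mod (hM : 2 ≤ M) {l : ℕ} (hl : l ≤ n) :
    (gea a n M (l % M)).coeff (n - l) = a l := by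
  rw [gea_of_lt (Nat.mod_lt _ (by omega)), coeff_geaInit, Nat.sub_sub_self hl,
    if_pos ⟨Nat.sub_le _ _, rfl⟩]

theorem natDegree_gea_one (hM : 2 ≤ M) (hne : ∀ i ≤ n + 1, gea a (n + 1) M i ≠ 0) :
    (gea a (n + 1) M 1).natDegree = n :=
  natDegree_gea hM hne le_rfl (by omega)

theorem coeff_gea_one (hM : 2 ≤ M) : (gea a (n + 1) M 1).coeff n = a 1 := by
  simpa [Nat.mod_eq_of_lt hM] using coeff_gea_mod (a := a) hM (show 1 ≤ n + 1 by omega)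

theorem leadingCoeff_gea_one (hM : 2 ≤ M) (hne : ∀ i ≤ n + 1, gea a (n + 1) M i ≠ 0) :
    (gea a (n + 1) M 1).leadingCoeff = a 1 := by
  rw [leadingCoeff, natDegree_gea_one hM hne, coeff_gea_one hM]

theorem apply_one_ne_zero (hM : 2 ≤ M) (hne : ∀ i ≤ n + 1, gea a (n + 1) M i ≠ 0) :
    a 1 ≠ 0 :=
  leadingCoeff_gea_one hM hne ▸ leadingCoeff_ne_zero.2 (hne 1 (by omega))

theorem degree_gea_one (hM : 2 ≤ M) (hne : ∀ i ≤ n + 1, gea a (n + 1) M i ≠ 0) :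
    (gea a (n + 1) M 1).degree = n := by
  rw [degree_eq_natDegree (hne 1 (by omega)), natDegree_gea_one hM hne]

theorem gea_self_eq (hM : 2 ≤ M) (hne : ∀ i ≤ n + 1, gea a (n + 1) M i ≠ 0) :
    gea a (n + 1) M M = gea a (n + 1) M 0 - C (a 0 / a 1) * X * gea a (n + 1) M 1 := by
  have ha1 := apply_one_ne_zero hM hne
  rw [gea_of_le hM le_rfl, Nat.sub_self, zero_add]
  refine (mod_eq_of_dvd_sub ⟨C (a 0 / a 1) * X, by ring⟩).trans
    ((mod_eq_self_iff (hne 1 (by omega))).2 ?_)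
  rw [degree_gea_one hM hne, degree_lt_iff_coeff_zero]
  intro m hm
  rw [mul_assoc, coeff_sub, coeff_C_mul]
  rcases (show m = n ∨ m = n + 1 ∨ n + 1 < m by omega) with rfl | rfl | hm
  · have h0 : (gea a (m + 1) M 0).coeff m = 0 :=
      coeff_gea_eq_zero hM (Nat.not_modEq_add_one hM m)
    have h1 : (X * gea a (m + 1) M 1).coeff m = 0 := by
      rcases m with _ | k
      · simp
      · rw [coeff_X_mul, coeff_gea_eq_zero hM (Nat.not_modEq_add_one hM (k + 1))]
    rw [h0, h1, mul_zero, sub_zero]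
  · have h0 := coeff_gea_mod (a := a) (M := M) hM (Nat.zero_le (n + 1))
    rw [Nat.zero_mod, Nat.sub_zero] at h0
    rw [coeff_X_mul, h0, coeff_gea_one hM]
    field_simp
    ring
  · obtain ⟨k, rfl⟩ : ∃ k, m = k + 1 := ⟨m - 1, by omega⟩
    rw [coeff_X_mul, coeff_eq_zero_of_natDegree_lt, coeff_eq_zero_of_natDegree_lt, mul_zero,
      sub_zero]
    · rw [natDegree_gea_one hM hne]; omega
    · have := natDegree_gea_le hM hne (Nat.zero_le _); omega

/-- `b_l` is the coefficient of `x ^ (n - l)` in `f_{1 + l % M}`: the coefficients of the degree-`n`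
polynomial `f₁ + ⋯ + f_M`, whose Euclidean sequence is `f₁, f₂, …` (`gea_tailCoeffs`). -/
noncomputable def tailCoeffs (a : ℕ → ℝ) (n M : ℕ) (l : ℕ) : ℝ :=
  (gea a (n + 1) M (l % M + 1)).coeff (n - l)

theorem coeff_gea_succ_eq_zero (hM : 2 ≤ M) (hne : ∀ i ≤ n + 1, gea a (n + 1) M i ≠ 0)
    {j e : ℕ} (hj : j < M) (he : n < e) : (gea a (n + 1) M (j + 1)).coeff e = 0 := by
  rcases Nat.lt_or_ge (j + 1) M with h | h
  · rw [gea_of_lt h, coeff_geaInit, if_neg]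
    rintro ⟨-, hmod⟩
    have := Nat.mod_le (n + 1 - e) M
    omega
  · rw [show j + 1 = M by omega, gea_of_le hM le_rfl, Nat.sub_self, zero_add]
    refine coeff_eq_zero_of_degree_lt ((EuclideanDomain.mod_lt _ (hne 1 (by omega))).trans_le ?_)
    rw [degree_gea_one hM hne]
    exact_mod_cast he.le

theorem geaInit_tailCoeffs (hM : 2 ≤ M) (hne : ∀ i ≤ n + 1, gea a (n + 1) M i ≠ 0)
    {j : ℕ} (hj : j < M) : geaInit (tailCoeffs a n M) n M j = gea a (n + 1) M (j + 1) := by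
  ext e
  rw [coeff_geaInit]
  split_ifs with h
  · rw [tailCoeffs, h.2, Nat.sub_sub_self h.1]
  · symm
    by_cases he : e ≤ n
    · refine coeff_gea_eq_zero hM fun hmod => h ⟨he, ?_⟩
      have hej : j + e ≡ n - e + e [MOD M] := by
        rw [Nat.sub_add_cancel he, add_comm]
        exact Nat.ModEq.add_right_cancel' 1 hmod
      rw [← Nat.mod_eq_of_lt hj]
      exact (Nat.ModEq.add_right_cancel' e hej).symm
    · exact coeff_gea_succ_eq_zero hM hne hj (by omega)

theorem gea_tailCoeffs (hM : 2 ≤ M) (hne : ∀ i ≤ n + 1, gea a (n + 1) M i ≠ 0) (i : ℕ) :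
    gea (tailCoeffs a n M) n M i = gea a (n + 1) M (i + 1) := by
  induction i using Nat.strong_induction_on with
  | _ i ih =>
    rcases Nat.lt_or_ge i M with h | h
    · rw [gea_of_lt h, geaInit_tailCoeffs hM hne h]
    · rw [gea_of_le hM h, gea_of_le hM (by omega : M ≤ i + 1), ih _ (by omega), ih _ (by omega),
        show i + 1 - M = i - M + 1 by omega]

theorem tailCoeffs_zero (hM : 2 ≤ M) :
    tailCoeffs a n M 0 = a 1 := by
  rw [tailCoeffs, Nat.zero_mod, zero_add, Nat.sub_zero, coeff_gea_one hM]

theorem apply_add_one_eq_tailCoeffs (hM : 2 ≤ M) (hne : ∀ i ≤ n + 1, gea a (n + 1) M i ≠ 0)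
    {L : ℕ} (hL : L ≤ n) :
    a (L + 1) = tailCoeffs a n M L +
      if M ∣ L + 1 then a 0 / a 1 * (if L + 1 ≤ n then tailCoeffs a n M (L + 1) else 0) else 0 := by
  have ha := coeff_gea_mod (a := a) hM (show L + 1 ≤ n + 1 by omega)
  rw [Nat.add_sub_add_right] at ha
  by_cases hd : M ∣ L + 1
  · rw [if_pos hd, tailCoeffs, Nat.mod_add_one_of_dvd hd, gea_self_eq hM hne, coeff_sub, mul_assoc,
      coeff_C_mul, ← ha, Nat.mod_eq_zero_of_dvd hd]
    split_ifs with hLn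
    · rw [tailCoeffs, show n - L = n - (L + 1) + 1 by omega, coeff_X_mul,
        Nat.mod_eq_zero_of_dvd hd]
      ring
    · rw [show n - L = 0 by omega]
      simp
  · rw [if_neg hd, add_zero, tailCoeffs, ← Nat.add_one_mod_of_not_dvd hd, ha]

theorem hEntry_eq_tailCoeffs (hM : 2 ≤ M) (hne : ∀ i ≤ n + 1, gea a (n + 1) M i ≠ 0) (i j : ℕ) :
    hEntry a (n + 1) M i j = hEntry (tailCoeffs a n M) n M (i + 1) j +
      (if M ∣ i + 1 then a 0 / a 1 else 0) * hEntry (tailCoeffs a n M) n M i j := by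
  unfold hEntry
  rcases lt_trichotomy (i + 1) (M * (j + 1)) with h | h | h
  · obtain ⟨L, hL⟩ : ∃ L, M * (j + 1) = i + 1 + (L + 1) := ⟨M * (j + 1) - (i + 2), by omega⟩
    have hsum : M ∣ i + 1 + (L + 1) := hL ▸ dvd_mul_right M _
    have hdvd : (M ∣ i + 1) = (M ∣ L + 1) := propext
      ⟨fun h1 => (Nat.dvd_add_right h1).1 hsum, fun h2 => (Nat.dvd_add_left h2).1 hsum⟩
    have c0 : (i + 1 ≤ i + 1 + (L + 1) ∧ L + 1 ≤ n + 1) = (L ≤ n) := propext (by omega)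
    have c1 : (i + 1 + 1 ≤ i + 1 + (L + 1) ∧ L ≤ n) = (L ≤ n) := propext (by omega)
    have c2 : (i + 1 ≤ i + 1 + (L + 1) ∧ L + 1 ≤ n) = (L + 1 ≤ n) := propext (by omega)
    rw [hL, show i + 1 + (L + 1) - (i + 1) = L + 1 by omega,
      show i + 1 + (L + 1) - (i + 1 + 1) = L by omega]
    simp only [c0, c1, c2, hdvd]
    by_cases hLn : L ≤ n
    · simp only [hLn, if_true, apply_add_one_eq_tailCoeffs hM hne hLn]
      split_ifs <;> simp
    · have hLn' : ¬ L + 1 ≤ n := by omega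
      simp [hLn, hLn']
  · have ha1 := apply_one_ne_zero hM hne
    have hd : M ∣ i + 1 := h ▸ dvd_mul_right M _
    rw [← h, Nat.sub_self]
    simp [hd, tailCoeffs_zero hM, ha1]
  · have h1 : ¬ i + 1 ≤ M * (j + 1) := by omega
    have h2 : ¬ i + 1 + 1 ≤ M * (j + 1) := by omega
    simp [h1, h2]

end GeneralizedEuclid

section TotalNonneg

open Matrix

variable {A B : ℕ → ℕ → ℝ} {w : ℕ → ℝ}

theorem IsTotallyNonneg.det_nonneg_of_monotone (hB : IsTotallyNonneg B) {p : ℕ}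
    {ρ C : Fin p → ℕ} (hρ : Monotone ρ) (hC : StrictMono C) :
    0 ≤ det (of fun s t => B (ρ s) (C t)) := by
  by_cases hinj : Function.Injective ρ
  · exact hB p ρ C (hρ.strictMono_of_injective hinj) hC
  · obtain ⟨s, s', heq, hne⟩ : ∃ s s', ρ s = ρ s' ∧ s ≠ s' := by
      simpa [Function.Injective] using hinj
    rw [det_zero_of_row_eq hne (funext fun t => by simp [heq])]

theorem isTotallyNonneg_of_monotone_support (φ : ℕ → ℕ) (hφ : Monotone φ)
    (hA : ∀ i j, 0 ≤ A i j) (hsupp : ∀ i j, A i j ≠ 0 → j = φ i) : IsTotallyNonneg A := by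
  intro p R C hR hC
  rw [det_apply, Finset.sum_eq_single 1 _ (by simp)]
  · simpa using Finset.prod_nonneg fun t _ => hA _ _
  -- A nonzero term has `C t = φ (R (σ t))` for all `t`, which forces `σ` to be monotone.
  intro σ _ hσ
  obtain ⟨t, ht⟩ : ∃ t, A (R (σ t)) (C t) = 0 := by
    by_contra! h
    refine hσ (Equiv.ext fun t => (StrictMono.apply_eq (f := σ) fun t t' htt' => ?_))
    by_contra! hle
    have h1 := hsupp _ _ (h t)
    have h2 := hsupp _ _ (h t')
    have := hφ (hR.monotone hle)
    have := hC htt'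
    omega
  rw [Finset.prod_eq_zero (Finset.mem_univ t) (by simpa using ht), smul_zero]

theorem det_eq_sum_of_eq_add_mul (hA : ∀ i j, A i j = B (i + 1) j + w i * B i j)
    {p : ℕ} (R C : Fin p → ℕ) :
    det (of fun s t => A (R s) (C t)) = ∑ S : Finset (Fin p),
      (∏ s ∈ Sᶜ, w (R s)) * det (of fun s t => B (if s ∈ S then R s + 1 else R s) (C t)) := by
  classical
  let U : Fin p → Fin p → ℝ := fun s t => B (R s + 1) (C t)
  let W : Fin p → Fin p → ℝ := fun s t => w (R s) * B (R s) (C t)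
  have hsplit : (of fun s t => A (R s) (C t)) = of (U + W) := by
    ext s t
    simp [U, W, hA]
  rw [hsplit]
  refine ((detRowAlternating : (Fin p → ℝ) [⋀^Fin p]→ₗ[ℝ] ℝ).map_add_univ U W).trans
    (Finset.sum_congr rfl fun S _ => ?_)
  rw [← Finset.univ_inter Sᶜ, ← Finset.prod_ite_mem, ← det_mul_column]
  congr 1
  ext s t
  by_cases hs : s ∈ S <;> simp [hs, U, W]

theorem IsTotallyNonneg.of_eq_add_mul (hB : IsTotallyNonneg B) (hw : ∀ i, 0 ≤ w i)
    (hA : ∀ i j, A i j = B (i + 1) j + w i * B i j) : IsTotallyNonneg A := by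
  classical
  intro p R C hR hC
  rw [det_eq_sum_of_eq_add_mul hA]
  refine Finset.sum_nonneg fun S _ => mul_nonneg (Finset.prod_nonneg fun s _ => hw _) ?_
  refine hB.det_nonneg_of_monotone (fun s s' hss' => ?_) hC
  rcases hss'.eq_or_lt with rfl | hlt
  · rfl
  · have := hR hlt
    split_ifs <;> omega

theorem det_consecutive_of_eq_add_mul (hA : ∀ i j, A i j = B (i + 1) j + w i * B i j) {k : ℕ}
    (hk : w k = 0) {r : ℕ} (C : Fin r → ℕ) :
    det (of fun s t : Fin r => A (k + s) (C t)) =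
      det (of fun s t : Fin r => B (k + s + 1) (C t)) := by
  classical
  rw [det_eq_sum_of_eq_add_mul hA, Finset.sum_eq_single Finset.univ _ (by simp)]
  · simp
  -- The first row `s₀ ∉ S` has weight `w k = 0` or repeats the row `s₀ - 1 ∈ S` above it.
  intro S _ hS
  have hne : Sᶜ.Nonempty := Finset.nonempty_iff_ne_empty.2 (mt (Finset.compl_eq_empty_iff S).1 hS)
  set s₀ := Sᶜ.min' hne
  have hs₀ : s₀ ∉ S := Finset.mem_compl.1 (Sᶜ.min'_mem hne)
  rcases Nat.eq_zero_or_pos (s₀ : ℕ) with h0 | hpos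
  · rw [Finset.prod_eq_zero (Sᶜ.min'_mem hne) (by rw [h0, add_zero, hk]), zero_mul]
  · set s₁ : Fin r := ⟨s₀ - 1, by omega⟩
    have hs₁ : s₁ ∈ S := by
      by_contra h
      have := Sᶜ.min'_le s₁ (Finset.mem_compl.2 h)
      rw [Fin.le_def] at this
      simp [s₁] at this
      omega
    rw [det_zero_of_row_eq (i := s₁) (j := s₀) (Fin.ne_of_lt (Fin.lt_def.2 (by simp [s₁]; omega)))
      (funext fun t => by simp [hs₁, hs₀, s₁]; congr 1; omega), mul_zero]

theorem hEntry_add_left_succ (x : ℕ → ℝ) (m M i j : ℕ) :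
    hEntry x m M (M + i) (j + 1) = hEntry x m M i j := by
  have h1 : (M + i + 1 ≤ M * (j + 1 + 1)) = (i + 1 ≤ M * (j + 1)) := by
    rw [mul_add_one M (j + 1)]; exact propext (by omega)
  have h2 : M * (j + 1 + 1) - (M + i + 1) = M * (j + 1) - (i + 1) := by
    rw [mul_add_one M (j + 1)]; omega
  simp only [hEntry, h1, h2]

theorem specialMinor_self_succ {M : ℕ} (hM : 0 < M) (x : ℕ → ℝ) (m r : ℕ) :
    specialMinor x m M M (r + 1) = x 0 * specialMinor x m M 1 r := by
  rw [specialMinor, det_succ_column_zero, Finset.sum_eq_single 0]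
  · have hcorner : hEntry x m M (M - 1 + 0) 0 = x 0 := by
      rw [hEntry, if_pos (by omega)]
      congr 1
      omega
    have hsub : (of fun s t : Fin (r + 1) => hEntry x m M (M - 1 + s) t).submatrix
        (Fin.succAbove 0) Fin.succ = of fun s t : Fin r => hEntry x m M (1 - 1 + s) t := by
      ext s t
      simp only [submatrix_apply, of_apply, Fin.succAbove_zero, Fin.val_succ]
      rw [show M - 1 + (s + 1) = M + (1 - 1 + s) by omega, hEntry_add_left_succ]
    rw [hsub, of_apply, Fin.val_zero, hcorner, pow_zero, one_mul, specialMinor]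
  · intro s _ hs
    have : (s : ℕ) ≠ 0 := fun h => hs (Fin.ext h)
    refine mul_eq_zero_of_left (mul_eq_zero_of_right _ ?_) _
    show hEntry x m M (M - 1 + s) 0 = 0
    rw [hEntry, if_neg (by omega)]
  · simp

end TotalNonneg

section Main

variable {M : ℕ}

theorem nonneg_apply_zero_of_leadingCoeff_gea_pos (hM : 2 ≤ M) {n : ℕ} {a : ℕ → ℝ}
    (hpos : ∀ i ≤ n, 0 < (gea a n M i).leadingCoeff) : 0 ≤ a 0 := by
  have hne i hi : gea a n M i ≠ 0 := leadingCoeff_ne_zero.1 (hpos i hi).ne'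
  have h := coeff_nonneg_of_natDegree_le (natDegree_gea_le hM hne (Nat.zero_le n))
    (hpos 0 (Nat.zero_le n)).le
  have h0 := coeff_gea_mod (a := a) (n := n) hM (Nat.zero_le n)
  rw [Nat.zero_mod, Nat.sub_zero] at h0
  rwa [Nat.sub_zero, h0] at h

theorem pos_apply_one_of_leadingCoeff_gea_pos (hM : 2 ≤ M) {n : ℕ} {a : ℕ → ℝ}
    (hpos : ∀ i ≤ n + 1, 0 < (gea a (n + 1) M i).leadingCoeff) : 0 < a 1 :=
  leadingCoeff_gea_one hM (fun i hi => leadingCoeff_ne_zero.1 (hpos i hi).ne') ▸ hpos 1 (by omega)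

theorem leadingCoeff_gea_tailCoeffs_pos (hM : 2 ≤ M) {n : ℕ} {a : ℕ → ℝ}
    (hpos : ∀ i ≤ n + 1, 0 < (gea a (n + 1) M i).leadingCoeff) :
    ∀ i ≤ n, 0 < (gea (tailCoeffs a n M) n M i).leadingCoeff := fun i hi => by
  rw [gea_tailCoeffs hM (fun i hi => leadingCoeff_ne_zero.1 (hpos i hi).ne')]
  exact hpos (i + 1) (by omega)

theorem isTotallyNonneg_hEntry (hM : 2 ≤ M) (n : ℕ) (a : ℕ → ℝ)
    (hpos : ∀ i ≤ n, 0 < (gea a n M i).leadingCoeff) : IsTotallyNonneg (hEntry a n M) := by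
  induction n generalizing a with
  | zero =>
    have ha0 := nonneg_apply_zero_of_leadingCoeff_gea_pos hM hpos
    refine isTotallyNonneg_of_monotone_support (· / M) (fun i j h => Nat.div_le_div_right h)
      (fun i j => ?_) (fun i j h => ?_)
    · unfold hEntry
      split_ifs with hij
      · rwa [show M * (j + 1) - (i + 1) = 0 by omega]
      · rfl
    · unfold hEntry at h
      split_ifs at h with hij
      · have h1 := hij.1
        have h2 := hij.2
        rw [mul_add_one] at h1 h2
        exact (Nat.div_eq_of_lt_le (by rw [mul_comm]; omega)
          (by rw [add_one_mul, mul_comm]; omega)).symm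
      · exact absurd rfl h
  | succ n ih =>
    have hq : 0 ≤ a 0 / a 1 := div_nonneg (nonneg_apply_zero_of_leadingCoeff_gea_pos hM hpos)
      (pos_apply_one_of_leadingCoeff_gea_pos hM hpos).le
    refine (ih _ (leadingCoeff_gea_tailCoeffs_pos hM hpos)).of_eq_add_mul
      (fun i => by split_ifs; exacts [hq, le_rfl])
      (hEntry_eq_tailCoeffs hM (fun i hi => leadingCoeff_ne_zero.1 (hpos i hi).ne'))

theorem specialMinor_pos (hM : 2 ≤ M) (n : ℕ) (a : ℕ → ℝ)
    (hpos : ∀ i ≤ n, 0 < (gea a n M i).leadingCoeff) :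
    ∀ k r : ℕ, 1 ≤ k → k ≤ M - 1 → 1 ≤ r →
      (M - 1) * (r - 1) + (M - k) ≤ n → 0 < specialMinor a n M k r := by
  induction n generalizing a with
  | zero => intro k r _ hkM _ hle; omega
  | succ n ih =>
    intro k r hk1 hkM hr hle
    have hb := leadingCoeff_gea_tailCoeffs_pos hM hpos
    have hshift : specialMinor a (n + 1) M k r = specialMinor (tailCoeffs a n M) n M (k + 1) r := by
      have hw : (if M ∣ k - 1 + 1 then a 0 / a 1 else 0) = 0 :=
        if_neg (Nat.not_dvd_of_pos_of_lt (by omega) (by omega))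
      have := det_consecutive_of_eq_add_mul
        (hEntry_eq_tailCoeffs hM (fun i hi => leadingCoeff_ne_zero.1 (hpos i hi).ne')) hw
        (fun t : Fin r => (t : ℕ))
      unfold specialMinor
      rw [this]
      simp only [show ∀ s : ℕ, k - 1 + s + 1 = k + 1 - 1 + s from fun s => by omega]
    rw [hshift]
    rcases Nat.lt_or_ge (k + 1) M with hk | hk
    · exact ih _ hb (k + 1) r (by omega) (by omega) hr (by omega)
    obtain ⟨r, rfl⟩ : ∃ r', r = r' + 1 := ⟨r - 1, by omega⟩
    rw [show k + 1 = M by omega, specialMinor_self_succ (by omega), tailCoeffs_zero hM]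
    refine mul_pos (pos_apply_one_of_leadingCoeff_gea_pos hM hpos) ?_
    rcases Nat.eq_zero_or_pos r with rfl | hr'
    · simp [specialMinor]
    refine ih _ hb 1 r le_rfl (by omega) hr' ?_
    have : (M - 1) * (r - 1) + (M - 1) = (M - 1) * r := by
      rw [← mul_add_one, Nat.sub_add_cancel (Nat.one_le_iff_ne_zero.2 hr'.ne')]
    rw [Nat.add_sub_cancel] at hle
    omega

end Main

theorem pos_leading_coeffs_imp_special_minors_pos_and_TN_general
    (n M : ℕ) (a : ℕ → ℝ) (hM : 2 ≤ M)
    (hpos : ∀ i ≤ n, 0 < (gea a n M i).leadingCoeff) :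
    (∀ k r : ℕ, 1 ≤ k → k ≤ M - 1 → 1 ≤ r →
      (M - 1) * (r - 1) + (M - k) ≤ n → 0 < specialMinor a n M k r) ∧
    IsTotallyNonneg (hEntry a n M) :=
  ⟨specialMinor_pos hM n a hpos, isTotallyNonneg_hEntry hM n a hpos⟩

/-- If all the leading coefficients `h_0, ..., h_n` of the polynomials produced by the
generalized Euclidean algorithm with step `M` are positive, then all special minors
`Δ_p = H_M(k,r)`, `p = (M-1)(r-1)+(M-k) ∈ {1,...,n}`, are positive and `H_M(f)` is
totally nonnegative. -/
theorem pos_leading_coeffs_imp_special_minors_pos_and_TN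
    (n M : ℕ) (a : ℕ → ℝ) (ha0 : a 0 ≠ 0) (hM : 2 ≤ M) (hMn : M ≤ n)
    (hpos : ∀ i ≤ n, 0 < (gea a n M i).leadingCoeff) :
    (∀ k r : ℕ, 1 ≤ k → k ≤ M - 1 → 1 ≤ r →
      (M - 1) * (r - 1) + (M - k) ≤ n → 0 < specialMinor a n M k r) ∧
    IsTotallyNonneg (hEntry a n M) :=
  pos_leading_coeffs_imp_special_minors_pos_and_TN_general n M a hM hpos
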